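/- arXiv:1301.6791 — 7 statements merged into one kernel-verified Lean document; each statement's English description precedes it below -/
import Mathlib

section
/- Let A be an M×N real matrix and D the (N-1)×N finite difference matrix with (Dx)_i = x_{i+1} - x_i. Then every vector x whose gradient Dx has at most K nonzero entries is the unique minimizer of ‖Dz‖₁ subject to Az = Ax, if and only if for every nonzero z in the null space of A and every index set 𝒦 ⊆ {1,…,N-1} with |𝒦| ≤ K, one has ‖(Dz)_𝒦‖₁ < ‖(Dz)_{𝒦ᶜ}‖₁. -/
open Finset

/-- Finite difference operator: `(Df x) i = x (i+1) - x i`. -/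
noncomputable def Df {N : ℕ} (x : Fin N → ℝ) : Fin (N - 1) → ℝ :=
  fun i => x ⟨i.val + 1, by have := i.isLt; omega⟩ - x ⟨i.val, by have := i.isLt; omega⟩

/-- ℓ¹ norm. -/
noncomputable def l1 {m : ℕ} (v : Fin m → ℝ) : ℝ := ∑ i, |v i|

/-- Restriction of a vector to an index set (zeroing out the rest). -/
noncomputable def restr {m : ℕ} (K : Finset (Fin m)) (v : Fin m → ℝ) : Fin m → ℝ :=
  fun i => if i ∈ K then v i else 0

/-- Cumulative sum: a right inverse of `Df`. -/
noncomputable def cums {N : ℕ} (v : Fin (N - 1) → ℝ) : Fin N → ℝ :=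
  fun i => ∑ j ∈ univ.filter (fun j : Fin (N - 1) => (j : ℕ) < (i : ℕ)), v j

lemma Df_cums {N : ℕ} (v : Fin (N - 1) → ℝ) : Df (cums v) = v := by
  funext i
  simp only [Df, cums]
  have h : (univ.filter (fun j : Fin (N - 1) => (j : ℕ) < (i : ℕ) + 1))
      = insert i (univ.filter (fun j : Fin (N - 1) => (j : ℕ) < (i : ℕ))) := by
    ext j
    simp only [mem_filter, mem_insert, mem_univ, true_and]
    constructor
    · intro h
      rcases Nat.lt_succ_iff_lt_or_eq.mp h with h | h
      · exact Or.inr h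
      · exact Or.inl (Fin.ext h)
    · rintro (rfl | h) <;> omega
  rw [h, Finset.sum_insert (by simp)]
  ring

theorem stmt0 (M N K : ℕ) (A : Matrix (Fin M) (Fin N) ℝ) :
    (∀ x : Fin N → ℝ, {i | Df x i ≠ 0}.ncard ≤ K →
      ∀ z : Fin N → ℝ, A.mulVec z = A.mulVec x → z ≠ x → l1 (Df x) < l1 (Df z))
    ↔
    (∀ z : Fin N → ℝ, A.mulVec z = 0 → z ≠ 0 →
      ∀ 𝒦 : Finset (Fin (N - 1)), 𝒦.card ≤ K →
        l1 (restr 𝒦 (Df z)) < l1 (restr 𝒦ᶜ (Df z))) := by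
  constructor
  · intro h z hz hz0 𝒦 h𝒦
    set x : Fin N → ℝ := cums (restr 𝒦 (Df z)) with hx
    have hDx : Df x = restr 𝒦 (Df z) := Df_cums _
    have hsupp : {i | Df x i ≠ 0}.ncard ≤ K := by
      refine le_trans (le_trans (Set.ncard_le_ncard (fun i hi => ?_) 𝒦.finite_toSet) ?_) h𝒦
      · simp only [Set.mem_setOf_eq, hDx, restr] at hi
        rw [Finset.mem_coe]
        by_contra hc
        simp [hc] at hi
      · rw [Set.ncard_coe_finset]
    have hAz : A.mulVec (x - z) = A.mulVec x := by
      rw [Matrix.mulVec_sub, hz, sub_zero]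
    have hne : x - z ≠ x := by
      intro hc
      apply hz0
      have := sub_eq_self.mp hc
      -- x - z = x → z = 0
      exact this
    have key := h x hsupp (x - z) hAz hne
    have hDxz : ∀ i, Df (x - z) i = Df x i - Df z i := by
      intro i; simp [Df, Pi.sub_apply]; ring
    have h1 : l1 (Df x) = l1 (restr 𝒦 (Df z)) := by rw [hDx]
    have h2 : l1 (Df (x - z)) = l1 (restr 𝒦ᶜ (Df z)) := by
      unfold l1
      apply Finset.sum_congr rfl
      intro i _
      rw [hDxz i, hDx]
      by_cases hi : i ∈ 𝒦 <;> simp [restr, hi]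
    rw [h1, h2] at key
    exact key
  · intro h x hsupp z hz hzx
    set w : Fin N → ℝ := z - x with hw
    have hAw : A.mulVec w = 0 := by rw [hw, Matrix.mulVec_sub, hz, sub_self]
    have hw0 : w ≠ 0 := sub_ne_zero.mpr hzx
    set 𝒦 : Finset (Fin (N - 1)) := univ.filter (fun i => Df x i ≠ 0) with h𝒦def
    have hcard : 𝒦.card ≤ K := by
      have : {i | Df x i ≠ 0}.toFinset = 𝒦 := by
        ext i; simp [h𝒦def]
      rw [← this]
      rwa [Set.ncard_eq_toFinset_card'] at hsupp
    have nsp := h w hAw hw0 𝒦 hcard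
    have hzi : ∀ i, Df z i = Df x i + Df w i := by
      intro i; simp [Df, hw, Pi.sub_apply]; ring
    have key : ∀ i, |Df x i| - |restr 𝒦 (Df w) i| + |restr 𝒦ᶜ (Df w) i| ≤ |Df z i| := by
      intro i
      by_cases hi : i ∈ 𝒦
      · have h4 : i ∉ 𝒦ᶜ := by simp [hi]
        simp only [restr, if_pos hi, if_neg h4, abs_zero, add_zero]
        have := abs_add_le (Df x i + Df w i) (-(Df w i))
        simp only [add_neg_cancel_right, abs_neg] at this
        rw [hzi i]
        linarith
      · have hx0 : Df x i = 0 := by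
          by_contra hc
          exact hi (by simp [h𝒦def, hc])
        have h4 : i ∈ 𝒦ᶜ := by simp [hi]
        simp only [restr, if_neg hi, if_pos h4, abs_zero, hzi i, hx0, abs_zero, zero_add,
          sub_zero, zero_sub]
        linarith [abs_nonneg (Df w i)]
    have hsum := Finset.sum_le_sum (fun i (_ : i ∈ univ) => key i)
    simp only [Finset.sum_add_distrib, Finset.sum_sub_distrib] at hsum
    unfold l1 at nsp ⊢
    linarith
end

section
/- Let N = 2^L and let y ∈ ℝ^{N/2} be defined from x ∈ ℝ^N by y_i = (x_{2i-1} + x_{2i})/2 (one level of Haar averaging), and let ŷ ∈ ℝ^N be y ⊗ [1,1] (each entry of y repeated twice). Then ‖Dŷ‖₁ ≤ ‖Dx‖₁, where D denotes the finite difference operator on the respective spaces. -/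
open Finset

/-- Total variation: `‖Df x‖₁`. -/
noncomputable def tv {N : ℕ} (x : Fin N → ℝ) : ℝ := ∑ i, |Df x i|

lemma pair_sum (f : ℕ → ℝ) (k : ℕ) :
    ∑ n ∈ range (2 * k), f n = ∑ i ∈ range k, (f (2 * i) + f (2 * i + 1)) := by
  induction k with
  | zero => simp
  | succ k ih =>
    have h2 : 2 * (k + 1) = 2 * k + 1 + 1 := by ring
    rw [h2, Finset.sum_range_succ, Finset.sum_range_succ, ih, Finset.sum_range_succ]
    ring

lemma abs_half_bound (a0 a1 a2 a3 : ℝ) :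
    |(a2 + a3) / 2 - (a0 + a1) / 2| ≤ |a1 - a0| / 2 + |a2 - a1| + |a3 - a2| / 2 := by
  have h1 : (a2 + a3) / 2 - (a0 + a1) / 2 = (a1 - a0) / 2 + (a2 - a1) + (a3 - a2) / 2 := by
    ring
  rw [h1]
  calc |(a1 - a0) / 2 + (a2 - a1) + (a3 - a2) / 2|
      ≤ |(a1 - a0) / 2 + (a2 - a1)| + |(a3 - a2) / 2| := abs_add_le _ _
    _ ≤ |(a1 - a0) / 2| + |a2 - a1| + |(a3 - a2) / 2| := by
        linarith [abs_add_le ((a1 - a0) / 2) (a2 - a1)]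
    _ = |a1 - a0| / 2 + |a2 - a1| + |a3 - a2| / 2 := by
        rw [abs_div, abs_div, abs_two]

lemma haar_aux (M : ℕ) (hM : 1 ≤ M)
    (x : Fin (2 * M) → ℝ)
    (y : Fin M → ℝ)
    (hy : ∀ i : Fin M, y i =
      (x ⟨2 * i.val, by have := i.isLt; omega⟩ +
       x ⟨2 * i.val + 1, by have := i.isLt; omega⟩) / 2)
    (yhat : Fin (2 * M) → ℝ)
    (hyhat : ∀ j, yhat j = y ⟨j.val / 2, by have := j.isLt; omega⟩) :
    tv yhat ≤ tv x := by
  set X : ℕ → ℝ := fun n => if h : n < 2 * M then x ⟨n, h⟩ else 0 with hX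
  set XH : ℕ → ℝ := fun n => if h : n < 2 * M then yhat ⟨n, h⟩ else 0 with hXH
  have hXval : ∀ (n : ℕ) (h : n < 2 * M), X n = x ⟨n, h⟩ := fun n h => dif_pos h
  have hXHval : ∀ (n : ℕ) (h : n < 2 * M), XH n = yhat ⟨n, h⟩ := fun n h => dif_pos h
  set e : ℕ → ℝ := fun n => |X (n + 1) - X n| with he
  set E : ℕ → ℝ := fun n => |XH (n + 1) - XH n| with hE
  have hen : ∀ n, 0 ≤ e n := fun n => abs_nonneg _
  -- tv as range sums
  have htvx : tv x = ∑ n ∈ range (2 * M - 1), e n := by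
    rw [tv, ← Fin.sum_univ_eq_sum_range e (2 * M - 1)]
    apply Finset.sum_congr rfl
    intro i _
    have h1 : (i : ℕ) + 1 < 2 * M := by have := i.isLt; omega
    have h0 : (i : ℕ) < 2 * M := by omega
    simp only [Df, he, hXval _ h1, hXval _ h0]
  have htvyh : tv yhat = ∑ n ∈ range (2 * M - 1), E n := by
    rw [tv, ← Fin.sum_univ_eq_sum_range E (2 * M - 1)]
    apply Finset.sum_congr rfl
    intro i _
    have h1 : (i : ℕ) + 1 < 2 * M := by have := i.isLt; omega
    have h0 : (i : ℕ) < 2 * M := by omega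
    simp only [Df, hE, hXHval _ h1, hXHval _ h0]
  -- even differences vanish
  have hEeven : ∀ i : ℕ, 2 * i + 1 < 2 * M → E (2 * i) = 0 := by
    intro i hi
    have h0 : 2 * i < 2 * M := by omega
    have hiM : i < M := by omega
    have hy1 : XH (2 * i + 1) = y ⟨i, hiM⟩ := by
      rw [hXHval _ hi, hyhat]
      congr 1
      apply Fin.ext
      simp
      omega
    have hy0 : XH (2 * i) = y ⟨i, hiM⟩ := by
      rw [hXHval _ h0, hyhat]
      congr 1
      apply Fin.ext
      simp
    simp [hE, hy1, hy0]
  -- odd differences bounded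
  have hEodd : ∀ i : ℕ, i < M - 1 →
      E (2 * i + 1) ≤ e (2 * i) / 2 + e (2 * i + 1) + e (2 * i + 2) / 2 := by
    intro i hi
    have h0 : 2 * i < 2 * M := by omega
    have h1 : 2 * i + 1 < 2 * M := by omega
    have h2 : 2 * i + 2 < 2 * M := by omega
    have h3 : 2 * i + 3 < 2 * M := by omega
    have hiM : i < M := by omega
    have hi1M : i + 1 < M := by omega
    have hyv1 : XH (2 * i + 1) = y ⟨i, hiM⟩ := by
      rw [hXHval _ h1, hyhat]
      congr 1
      apply Fin.ext
      simp
      omega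
    have hyv2 : XH (2 * i + 2) = y ⟨i + 1, hi1M⟩ := by
      rw [hXHval _ h2, hyhat]
      congr 1
      apply Fin.ext
      simp
    have hyi : y ⟨i, hiM⟩ = (X (2 * i) + X (2 * i + 1)) / 2 := by
      rw [hy ⟨i, hiM⟩, hXval _ h0, hXval _ h1]
    have hyi1 : y ⟨i + 1, hi1M⟩ = (X (2 * i + 2) + X (2 * i + 3)) / 2 := by
      rw [hy ⟨i + 1, hi1M⟩, hXval _ h2, hXval _ h3]
      congr 2
    have hval : E (2 * i + 1) = |(X (2 * i + 2) + X (2 * i + 3)) / 2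
        - (X (2 * i) + X (2 * i + 1)) / 2| := by
      simp only [hE]
      rw [show 2 * i + 1 + 1 = 2 * i + 2 from rfl, hyv2, hyv1, hyi, hyi1]
    rw [hval]
    have hb := abs_half_bound (X (2 * i)) (X (2 * i + 1)) (X (2 * i + 2)) (X (2 * i + 3))
    simpa [he] using hb
  -- assemble
  have h2M : 2 * M - 1 = 2 * (M - 1) + 1 := by omega
  have hsplitE : ∑ n ∈ range (2 * M - 1), E n
      = ∑ i ∈ range (M - 1), (E (2 * i) + E (2 * i + 1)) + E (2 * (M - 1)) := by
    rw [h2M, Finset.sum_range_succ, pair_sum]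
  have hsplite : ∑ n ∈ range (2 * M - 1), e n
      = ∑ i ∈ range (M - 1), (e (2 * i) + e (2 * i + 1)) + e (2 * (M - 1)) := by
    rw [h2M, Finset.sum_range_succ, pair_sum]
  have hElast : E (2 * (M - 1)) = 0 := hEeven _ (by omega)
  have hEzero : ∀ i ∈ range (M - 1), E (2 * i) + E (2 * i + 1) = E (2 * i + 1) := by
    intro i hi
    rw [hEeven i (by simp at hi; omega), zero_add]
  rw [htvx, htvyh, hsplitE, hsplite, hElast, add_zero, Finset.sum_congr rfl hEzero]
  -- main inequality
  have hle : ∑ i ∈ range (M - 1), E (2 * i + 1)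
      ≤ ∑ i ∈ range (M - 1), (e (2 * i) / 2 + e (2 * i + 1) + e (2 * i + 2) / 2) := by
    apply Finset.sum_le_sum
    intro i hi
    exact hEodd i (by simp at hi; omega)
  refine hle.trans ?_
  have hshift : ∑ i ∈ range (M - 1), e (2 * i + 2) + e 0
      = ∑ i ∈ range (M - 1), e (2 * i) + e (2 * (M - 1)) := by
    have h1 : ∑ i ∈ range M, e (2 * i)
        = ∑ i ∈ range (M - 1), e (2 * (i + 1)) + e (2 * 0) := by
      conv_lhs => rw [show M = (M - 1) + 1 from by omega]
      rw [Finset.sum_range_succ']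
    have h2 : ∑ i ∈ range M, e (2 * i)
        = ∑ i ∈ range (M - 1), e (2 * i) + e (2 * (M - 1)) := by
      conv_lhs => rw [show M = (M - 1) + 1 from by omega]
      rw [Finset.sum_range_succ]
    have h3 : ∑ i ∈ range (M - 1), e (2 * (i + 1))
        = ∑ i ∈ range (M - 1), e (2 * i + 2) := by
      apply Finset.sum_congr rfl
      intro i _
      have h4 : 2 * (i + 1) = 2 * i + 2 := by ring
      rw [h4]
    rw [h3] at h1
    simp only [mul_zero] at h1
    linarith [h1, h2]
  have hsum1 : ∑ i ∈ range (M - 1), (e (2 * i) / 2 + e (2 * i + 1) + e (2 * i + 2) / 2)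
      = (∑ i ∈ range (M - 1), e (2 * i)) / 2 + ∑ i ∈ range (M - 1), e (2 * i + 1)
        + (∑ i ∈ range (M - 1), e (2 * i + 2)) / 2 := by
    rw [Finset.sum_add_distrib, Finset.sum_add_distrib, ← Finset.sum_div, ← Finset.sum_div]
  have hsum2 : ∑ i ∈ range (M - 1), (e (2 * i) + e (2 * i + 1))
      = ∑ i ∈ range (M - 1), e (2 * i) + ∑ i ∈ range (M - 1), e (2 * i + 1) := by
    rw [Finset.sum_add_distrib]
  rw [hsum1, hsum2]
  linarith [hshift, hen 0, hen (2 * (M - 1))]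

/-- One level of Haar averaging does not increase total variation.
Here `N = 2^L` is written as `2 * 2^(L-1)`. -/
theorem stmt3 (L : ℕ) (hL : 1 ≤ L)
    (x : Fin (2 * 2 ^ (L - 1)) → ℝ)
    (y : Fin (2 ^ (L - 1)) → ℝ)
    (hy : ∀ i : Fin (2 ^ (L - 1)), y i =
      (x ⟨2 * i.val, by have := i.isLt; omega⟩ +
       x ⟨2 * i.val + 1, by have := i.isLt; omega⟩) / 2)
    (yhat : Fin (2 * 2 ^ (L - 1)) → ℝ)
    (hyhat : ∀ j, yhat j = y ⟨j.val / 2, by have := j.isLt; omega⟩) :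
    tv yhat ≤ tv x := by
  exact haar_aux (2 ^ (L - 1)) Nat.one_le_two_pow x y hy yhat hyhat
end

section
/- With the Haar decomposition of x ∈ ℝ^N (N = 2^L) as above, for each level ℓ the wavelet coefficient vector z^{(ℓ)} satisfies ‖z^{(ℓ)}‖₁ ≤ ‖Dŷ^{(ℓ-1)}‖₁ / 2, where ŷ^{(ℓ-1)} is the level-(ℓ-1) approximation (with ŷ^{(0)} = x) and D is the finite difference operator. -/
open Finset

/-- For the Haar decomposition of `x ∈ ℝ^{2^L}` (0-based indexing over `Finset.range (2^L)`),
the level-`ℓ` detail coefficients satisfy `‖z^{(ℓ)}‖₁ ≤ ‖D ŷ^{(ℓ-1)}‖₁ / 2`, where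
`ŷ^{(ℓ-1)}` is the level-(ℓ-1) approximation lifted to `ℝ^{2^L}` (and `ŷ^{(0)} = x`). -/
theorem stmt5 (L : ℕ) (x : ℕ → ℝ)
    (y z : ℕ → ℕ → ℝ)
    (hy0 : ∀ i, y 0 i = x i)
    (hy : ∀ ℓ i, y (ℓ + 1) i = (y ℓ (2 * i) + y ℓ (2 * i + 1)) / 2)
    (hz : ∀ ℓ i, z (ℓ + 1) i = (y ℓ (2 * i) - y ℓ (2 * i + 1)) / 2)
    (yhat : ℕ → ℕ → ℝ)
    (hyhat : ∀ ℓ j, yhat ℓ j = y ℓ (j / 2 ^ ℓ)) :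
    ∀ ℓ, 1 ≤ ℓ → ℓ ≤ L →
      ∑ i ∈ Finset.range (2 ^ (L - ℓ)), |z ℓ i| ≤
        (∑ j ∈ Finset.range (2 ^ L - 1), |yhat (ℓ - 1) (j + 1) - yhat (ℓ - 1) j|) / 2 := by
  intro ℓ hℓ1 hℓL
  obtain ⟨m, rfl⟩ : ∃ m, ℓ = m + 1 := ⟨ℓ - 1, by omega⟩
  simp only [Nat.add_sub_cancel]
  set pm := 2 ^ m with hpm'
  have hpm : 1 ≤ pm := Nat.one_le_two_pow
  set n := 2 ^ (L - (m + 1)) with hn'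
  have hP : n * (2 * pm) = 2 ^ L := by
    rw [hn', hpm', show 2 * 2 ^ m = 2 ^ (m + 1) by rw [pow_succ]; ring, ← pow_add]
    congr 1
    omega
  set f : ℕ → ℕ := fun i => (2 * i + 1) * pm - 1 with hf
  -- value of each term
  have hdiv1 : ∀ i, (f i + 1) / pm = 2 * i + 1 := by
    intro i
    have h1 : f i + 1 = (2 * i + 1) * pm := by
      have : 1 ≤ (2 * i + 1) * pm := Nat.one_le_iff_ne_zero.2 (by positivity)
      simp [hf]; omega
    rw [h1, Nat.mul_div_cancel _ (by omega)]
  have hdiv2 : ∀ i, f i / pm = 2 * i := by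
    intro i
    have h1 : f i = pm * (2 * i) + (pm - 1) := by
      have : 1 ≤ (2 * i + 1) * pm := Nat.one_le_iff_ne_zero.2 (by positivity)
      have h2 : (2 * i + 1) * pm = pm * (2 * i) + pm := by ring
      simp only [hf]; omega
    rw [h1, Nat.mul_add_div (by omega), Nat.div_eq_of_lt (by omega)]
    omega
  have hterm : ∀ i, |z (m + 1) i| * 2 = |yhat m (f i + 1) - yhat m (f i)| := by
    intro i
    rw [hz, hyhat, hyhat, hdiv1, hdiv2,
      abs_sub_comm (y m ((2 * i + 1))), abs_div]
    rw [abs_two]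
    ring
  rw [le_div_iff₀ (by norm_num : (0:ℝ) < 2), Finset.sum_mul]
  calc ∑ i ∈ Finset.range n, |z (m + 1) i| * 2
      = ∑ i ∈ Finset.range n, |yhat m (f i + 1) - yhat m (f i)| := by
        exact Finset.sum_congr rfl fun i _ => hterm i
    _ = ∑ j ∈ (Finset.range n).image f, |yhat m (j + 1) - yhat m j| := by
        rw [Finset.sum_image]
        intro a _ b _ hab
        have ha : (2 * a + 1) * pm - 1 = (2 * b + 1) * pm - 1 := hab
        have h1 : 1 ≤ (2 * a + 1) * pm := Nat.one_le_iff_ne_zero.2 (by positivity)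
        have h2 : 1 ≤ (2 * b + 1) * pm := Nat.one_le_iff_ne_zero.2 (by positivity)
        have : (2 * a + 1) * pm = (2 * b + 1) * pm := by omega
        have := Nat.eq_of_mul_eq_mul_right (by omega : 0 < pm) this
        omega
    _ ≤ ∑ j ∈ Finset.range (2 ^ L - 1), |yhat m (j + 1) - yhat m j| := by
        apply Finset.sum_le_sum_of_subset_of_nonneg
        · intro j hj
          simp only [Finset.mem_image, Finset.mem_range] at hj ⊢
          obtain ⟨i, hi, rfl⟩ := hj
          have h1 : (2 * i + 1) * pm ≤ (2 * n - 1) * pm :=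
            Nat.mul_le_mul_right _ (by omega)
          have h2 : (2 * n - 1) * pm = 2 * n * pm - pm := by
            rw [Nat.sub_mul]; ring_nf
          have h3 : 2 * n * pm = 2 ^ L := by rw [← hP]; ring
          have h4 : 1 ≤ (2 * i + 1) * pm := Nat.one_le_iff_ne_zero.2 (by positivity)
          simp only [hf]
          omega
        · intro j _ _
          exact abs_nonneg _
end

section
/- With the Haar decomposition of x ∈ ℝ^N (N = 2^L) satisfying ‖x‖₂ ≤ 1 and ‖Dx‖₁ ≤ 4√K, for each level ℓ one has ‖z^{(ℓ)}‖₁ ≤ min{√N / 2^ℓ, 2√K}. -/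
open Finset

lemma sum_pair' (n : ℕ) (f : ℕ → ℝ) :
    ∑ j ∈ Finset.range (2*n), f j = ∑ i ∈ Finset.range n, (f (2*i) + f (2*i+1)) := by
  induction n with
  | zero => simp
  | succ n ih =>
    rw [Nat.mul_succ, show 2*n+2 = (2*n+1)+1 from rfl, Finset.sum_range_succ,
      Finset.sum_range_succ, ih, Finset.sum_range_succ]
    ring

lemma tv_halve (n : ℕ) (a : ℕ → ℝ) :
    ∑ i ∈ Finset.range n, |a (2*i) - a (2*i+1)| ≤
      ∑ j ∈ Finset.range (2*n-1), |a (j+1) - a j| := by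
  cases n with
  | zero => simp
  | succ m =>
    rw [show 2*(m+1)-1 = 2*m+1 from by omega, Finset.sum_range_succ, Finset.sum_range_succ,
      sum_pair']
    have h1 : ∑ i ∈ Finset.range m, |a (2*i) - a (2*i+1)| ≤
        ∑ i ∈ Finset.range m, (|a (2*i+1) - a (2*i)| + |a (2*i+1+1) - a (2*i+1)|) := by
      apply Finset.sum_le_sum
      intro i _
      rw [abs_sub_comm]
      exact le_add_of_nonneg_right (abs_nonneg _)
    have h2 : |a (2*m) - a (2*m+1)| = |a (2*m+1) - a (2*m)| := abs_sub_comm _ _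
    linarith

lemma tv_step (n : ℕ) (a b : ℕ → ℝ) (hb : ∀ i, b i = (a (2*i) + a (2*i+1))/2) :
    ∑ i ∈ Finset.range (n-1), |b (i+1) - b i| ≤
      ∑ j ∈ Finset.range (2*n-1), |a (j+1) - a j| := by
  cases n with
  | zero => simp
  | succ m =>
    set d : ℕ → ℝ := fun j => |a (j+1) - a j| with hd
    have hdnn : ∀ j, 0 ≤ d j := fun j => abs_nonneg _
    simp only [Nat.add_sub_cancel]
    rw [show 2*(m+1)-1 = 2*m+1 from by omega, Finset.sum_range_succ, sum_pair']
    have hterm : ∀ i, |b (i+1) - b i| ≤ d (2*i)/2 + d (2*i+1) + d (2*i+2)/2 := by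
      intro i
      rw [hb, hb]
      have e2 : 2*(i+1) = 2*i+2 := by ring
      have e3 : 2*i+2+1 = 2*i+3 := rfl
      rw [e2, e3]
      have key : (a (2*i+2) + a (2*i+3))/2 - (a (2*i) + a (2*i+1))/2
          = ((a (2*i+1) - a (2*i)) + 2*(a (2*i+2) - a (2*i+1)) + (a (2*i+3) - a (2*i+2)))/2 := by
        ring
      rw [key]
      have h1 : |(a (2*i+1) - a (2*i)) + 2*(a (2*i+2) - a (2*i+1)) + (a (2*i+3) - a (2*i+2))|
          ≤ |a (2*i+1) - a (2*i)| + 2*|a (2*i+2) - a (2*i+1)| + |a (2*i+3) - a (2*i+2)| := by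
        calc |(a (2*i+1) - a (2*i)) + 2*(a (2*i+2) - a (2*i+1)) + (a (2*i+3) - a (2*i+2))|
            ≤ |(a (2*i+1) - a (2*i)) + 2*(a (2*i+2) - a (2*i+1))| + |a (2*i+3) - a (2*i+2)| :=
              abs_add_le _ _
          _ ≤ |a (2*i+1) - a (2*i)| + |2*(a (2*i+2) - a (2*i+1))| + |a (2*i+3) - a (2*i+2)| := by
              have := abs_add_le (a (2*i+1) - a (2*i)) (2*(a (2*i+2) - a (2*i+1)))
              linarith
          _ = |a (2*i+1) - a (2*i)| + 2*|a (2*i+2) - a (2*i+1)| + |a (2*i+3) - a (2*i+2)| := by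
              rw [abs_mul, abs_two]
      have h2 : |((a (2*i+1) - a (2*i)) + 2*(a (2*i+2) - a (2*i+1)) + (a (2*i+3) - a (2*i+2)))/2|
          = |(a (2*i+1) - a (2*i)) + 2*(a (2*i+2) - a (2*i+1)) + (a (2*i+3) - a (2*i+2))|/2 := by
        rw [abs_div, abs_two]
      have hd1 : d (2*i) = |a (2*i+1) - a (2*i)| := rfl
      have hd2 : d (2*i+1) = |a (2*i+2) - a (2*i+1)| := rfl
      have hd3 : d (2*i+2) = |a (2*i+3) - a (2*i+2)| := rfl
      rw [h2, hd1, hd2, hd3]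
      linarith
    have hsum1 : ∑ i ∈ Finset.range m, |b (i+1) - b i| ≤
        ∑ i ∈ Finset.range m, (d (2*i)/2 + d (2*i+1) + d (2*i+2)/2) :=
      Finset.sum_le_sum fun i _ => hterm i
    have hshift : ∑ i ∈ Finset.range m, d (2*i+2) ≤ ∑ i ∈ Finset.range m, d (2*i) + d (2*m) := by
      have h1 := Finset.sum_range_succ' (fun i => d (2*i)) m
      have h2 := Finset.sum_range_succ (fun i => d (2*i)) m
      simp only [Nat.mul_succ] at h1
      have h0 : 0 ≤ d 0 := hdnn 0
      simp only [Nat.mul_zero] at h1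
      linarith
    have hsplit : ∑ i ∈ Finset.range m, (d (2*i)/2 + d (2*i+1) + d (2*i+2)/2)
        = (∑ i ∈ Finset.range m, d (2*i))/2 + (∑ i ∈ Finset.range m, d (2*i+1))
          + (∑ i ∈ Finset.range m, d (2*i+2))/2 := by
      simp only [Finset.sum_add_distrib, Finset.sum_div]
    show ∑ i ∈ Finset.range m, |b (i+1) - b i| ≤
      ∑ i ∈ Finset.range m, (d (2*i) + d (2*i+1)) + d (2*m)
    have hsplit2 : ∑ i ∈ Finset.range m, (d (2*i) + d (2*i+1))
        = (∑ i ∈ Finset.range m, d (2*i)) + (∑ i ∈ Finset.range m, d (2*i+1)) :=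
      Finset.sum_add_distrib
    linarith [hdnn (2*m)]

lemma energy_step (n : ℕ) (a b c : ℕ → ℝ)
    (hb : ∀ i, b i = (a (2*i) + a (2*i+1))/2) (hc : ∀ i, c i = (a (2*i) - a (2*i+1))/2) :
    ∑ i ∈ Finset.range n, ((b i)^2 + (c i)^2) = (∑ j ∈ Finset.range (2*n), (a j)^2) / 2 := by
  rw [sum_pair', Finset.sum_div]
  apply Finset.sum_congr rfl
  intro i _
  rw [hb, hc]
  ring

/-- For the Haar decomposition of `x ∈ ℝ^{2^L}` (0-based indexing over `Finset.range (2^L)`)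
with `‖x‖₂ ≤ 1` and total variation `‖Dx‖₁ ≤ 4√K`, the level-`ℓ` Haar detail coefficients
satisfy `‖z^{(ℓ)}‖₁ ≤ min { √N / 2^ℓ , 2√K }` where `N = 2^L`. -/
theorem stmt6 (L K : ℕ) (x : ℕ → ℝ)
    (y z : ℕ → ℕ → ℝ)
    (hy0 : ∀ i, y 0 i = x i)
    (hy : ∀ ℓ i, y (ℓ + 1) i = (y ℓ (2 * i) + y ℓ (2 * i + 1)) / 2)
    (hz : ∀ ℓ i, z (ℓ + 1) i = (y ℓ (2 * i) - y ℓ (2 * i + 1)) / 2)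
    (hx2 : ∑ j ∈ Finset.range (2 ^ L), (x j) ^ 2 ≤ 1)
    (htv : ∑ j ∈ Finset.range (2 ^ L - 1), |x (j + 1) - x j| ≤ 4 * Real.sqrt K) :
    ∀ ℓ, 1 ≤ ℓ → ℓ ≤ L →
      ∑ i ∈ Finset.range (2 ^ (L - ℓ)), |z ℓ i| ≤
        min (Real.sqrt (2 ^ L) / 2 ^ ℓ) (2 * Real.sqrt K) := by
  -- energy bound
  have hS : ∀ ℓ, ℓ ≤ L → ∑ j ∈ Finset.range (2 ^ (L - ℓ)), (y ℓ j) ^ 2 ≤ (1/2 : ℝ) ^ ℓ := by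
    intro ℓ
    induction ℓ with
    | zero =>
      intro _
      simp only [Nat.sub_zero, pow_zero]
      calc ∑ j ∈ Finset.range (2 ^ L), (y 0 j) ^ 2
          = ∑ j ∈ Finset.range (2 ^ L), (x j) ^ 2 := by
            exact Finset.sum_congr rfl fun j _ => by rw [hy0]
        _ ≤ 1 := hx2
    | succ m ih =>
      intro hm1
      have hm : m ≤ L := by omega
      have h2 : 2 ^ (L - m) = 2 * 2 ^ (L - (m+1)) := by
        rw [← pow_succ']
        congr 1
        omega
      have he := energy_step (2 ^ (L - (m+1))) (y m) (y (m+1)) (z (m+1))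
        (fun i => hy m i) (fun i => hz m i)
      have hYm := ih hm
      rw [h2] at hYm
      have hsplit : ∑ i ∈ Finset.range (2 ^ (L - (m+1))), ((y (m+1) i) ^ 2 + (z (m+1) i) ^ 2)
          = (∑ i ∈ Finset.range (2 ^ (L - (m+1))), (y (m+1) i) ^ 2)
            + ∑ i ∈ Finset.range (2 ^ (L - (m+1))), (z (m+1) i) ^ 2 := Finset.sum_add_distrib
      have hznn : (0:ℝ) ≤ ∑ i ∈ Finset.range (2 ^ (L - (m+1))), (z (m+1) i) ^ 2 :=
        Finset.sum_nonneg fun i _ => sq_nonneg _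
      have hp : ((1:ℝ)/2) ^ (m+1) = (1/2) ^ m / 2 := by rw [pow_succ]; ring
      linarith
  -- detail-energy bound
  have hZ2 : ∀ m, m + 1 ≤ L →
      ∑ i ∈ Finset.range (2 ^ (L - (m+1))), (z (m+1) i) ^ 2 ≤ (1/2 : ℝ) ^ (m+1) := by
    intro m hm1
    have hm : m ≤ L := by omega
    have h2 : 2 ^ (L - m) = 2 * 2 ^ (L - (m+1)) := by
      rw [← pow_succ']; congr 1; omega
    have he := energy_step (2 ^ (L - (m+1))) (y m) (y (m+1)) (z (m+1))
      (fun i => hy m i) (fun i => hz m i)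
    have hYm := hS m hm
    rw [h2] at hYm
    have hsplit : ∑ i ∈ Finset.range (2 ^ (L - (m+1))), ((y (m+1) i) ^ 2 + (z (m+1) i) ^ 2)
        = (∑ i ∈ Finset.range (2 ^ (L - (m+1))), (y (m+1) i) ^ 2)
          + ∑ i ∈ Finset.range (2 ^ (L - (m+1))), (z (m+1) i) ^ 2 := Finset.sum_add_distrib
    have hynn : (0:ℝ) ≤ ∑ i ∈ Finset.range (2 ^ (L - (m+1))), (y (m+1) i) ^ 2 :=
      Finset.sum_nonneg fun i _ => sq_nonneg _
    have hp : ((1:ℝ)/2) ^ (m+1) = (1/2) ^ m / 2 := by rw [pow_succ]; ring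
    linarith
  -- total variation bound
  have hTV : ∀ ℓ, ℓ ≤ L →
      ∑ j ∈ Finset.range (2 ^ (L - ℓ) - 1), |y ℓ (j+1) - y ℓ j| ≤ 4 * Real.sqrt K := by
    intro ℓ
    induction ℓ with
    | zero =>
      intro _
      simp only [Nat.sub_zero]
      calc ∑ j ∈ Finset.range (2 ^ L - 1), |y 0 (j+1) - y 0 j|
          = ∑ j ∈ Finset.range (2 ^ L - 1), |x (j+1) - x j| := by
            exact Finset.sum_congr rfl fun j _ => by rw [hy0, hy0]
        _ ≤ 4 * Real.sqrt K := htv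
    | succ m ih =>
      intro hm1
      have hm : m ≤ L := by omega
      have h2 : 2 ^ (L - m) = 2 * 2 ^ (L - (m+1)) := by
        rw [← pow_succ']; congr 1; omega
      have hst := tv_step (2 ^ (L - (m+1))) (y m) (y (m+1)) (fun i => hy m i)
      rw [← h2] at hst
      exact le_trans hst (ih hm)
  intro ℓ hℓ1 hℓL
  obtain ⟨m, rfl⟩ : ∃ m, ℓ = m + 1 := ⟨ℓ - 1, by omega⟩
  have hm : m ≤ L := by omega
  have h2 : 2 ^ (L - m) = 2 * 2 ^ (L - (m+1)) := by
    rw [← pow_succ']; congr 1; omega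
  apply le_min
  · -- Cauchy–Schwarz bound
    set n := 2 ^ (L - (m+1)) with hn
    have hznn : (0:ℝ) ≤ ∑ i ∈ Finset.range n, |z (m+1) i| :=
      Finset.sum_nonneg fun i _ => abs_nonneg _
    have hcs : (∑ i ∈ Finset.range n, |z (m+1) i|) ^ 2
        ≤ (n : ℝ) * ∑ i ∈ Finset.range n, (z (m+1) i) ^ 2 := by
      have := Finset.sum_mul_sq_le_sq_mul_sq (Finset.range n) (fun _ => (1:ℝ))
        (fun i => |z (m+1) i|)
      simp only [one_mul, one_pow, sq_abs, Finset.sum_const, Finset.card_range,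
        nsmul_eq_mul, mul_one] at this
      exact this
    have hz2 := hZ2 m hℓL
    have hkey : (∑ i ∈ Finset.range n, |z (m+1) i|) ^ 2 ≤ (2:ℝ) ^ L / ((2:ℝ) ^ (m+1)) ^ 2 := by
      have hcast : ((n : ℝ)) = (2:ℝ) ^ (L - (m+1)) := by
        rw [hn]; push_cast; ring
      have hpow : (2:ℝ) ^ (L - (m+1)) * (2:ℝ) ^ (m+1) = (2:ℝ) ^ L := by
        rw [← pow_add]; congr 1; omega
      have h12 : ((1:ℝ)/2) ^ (m+1) = 1 / (2:ℝ) ^ (m+1) := by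
        rw [div_pow, one_pow]
      have hpos : (0:ℝ) < (2:ℝ) ^ (m+1) := by positivity
      calc (∑ i ∈ Finset.range n, |z (m+1) i|) ^ 2
          ≤ (n : ℝ) * ∑ i ∈ Finset.range n, (z (m+1) i) ^ 2 := hcs
        _ ≤ (n : ℝ) * ((1/2 : ℝ) ^ (m+1)) := by
            apply mul_le_mul_of_nonneg_left hz2 (by positivity)
        _ = (2:ℝ) ^ (L - (m+1)) * (1 / (2:ℝ) ^ (m+1)) := by rw [hcast, h12]
        _ = (2:ℝ) ^ L / ((2:ℝ) ^ (m+1)) ^ 2 := by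
            field_simp
            nlinarith [hpow]
    calc ∑ i ∈ Finset.range n, |z (m+1) i|
        = Real.sqrt ((∑ i ∈ Finset.range n, |z (m+1) i|) ^ 2) := (Real.sqrt_sq hznn).symm
      _ ≤ Real.sqrt ((2:ℝ) ^ L / ((2:ℝ) ^ (m+1)) ^ 2) := Real.sqrt_le_sqrt hkey
      _ = Real.sqrt ((2:ℝ) ^ L) / 2 ^ (m+1) := by
          rw [Real.sqrt_div (by positivity : (0:ℝ) ≤ (2:ℝ)^L), Real.sqrt_sq (by positivity : (0:ℝ) ≤ (2:ℝ)^(m+1))]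
  · -- total variation bound
    have hhalve := tv_halve (2 ^ (L - (m+1))) (y m)
    rw [← h2] at hhalve
    have htvm := hTV m hm
    have hzz : ∑ i ∈ Finset.range (2 ^ (L - (m+1))), |z (m+1) i|
        = (∑ i ∈ Finset.range (2 ^ (L - (m+1))), |y m (2*i) - y m (2*i+1)|) / 2 := by
      rw [Finset.sum_div]
      apply Finset.sum_congr rfl
      intro i _
      rw [hz, abs_div, abs_two]
    rw [hzz]
    linarith
end

section
/- For positive integers N = 2^L and K with 1 < K, let L₀ be the largest integer with 2^{L₀} ≤ (1/2)√(N/K). Then Σ_{ℓ=1}^{L} min{√(N/2^ℓ), 2√(2^ℓ K)} ≤ (4√2+4)(NK)^{1/4}. -/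
/-!
Writing `N = 2 ^ L`, the summand is `c * min (t / r ^ ℓ) (r ^ ℓ / t)` with `r = √2`,
`c = √2 (N K)^{1/4}` and `t = √N / c`. Cut the sum at the `m` with
`r ^ m ≤ max t 1 < r ^ (m + 1)`: the terms `ℓ ≤ m` are at most `r ^ ℓ / t`, the terms `ℓ > m`
at most `t / r ^ ℓ`, and the choice of `m` makes each of these geometric sums at most
`r / (r - 1)`. Hence the sum is at most `2 r / (r - 1) * c = (4√2 + 4) (N K)^{1/4}`.
-/

open Finset

theorem sum_Ico_one_pow_div_le {r t : ℝ} (hr : 1 < r) (ht : 0 < t) {m : ℕ}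
    (hm : r ^ m ≤ max t 1) : ∑ ℓ ∈ Ico 1 (m + 1), r ^ ℓ / t ≤ r / (r - 1) := by
  have hr1 : 0 < r - 1 := sub_pos.2 hr
  have hrm : r ^ m - 1 ≤ t := by linarith [hm.trans (max_le_add_of_nonneg ht.le zero_le_one)]
  rw [← sum_div, geom_sum_Ico hr.ne' (by omega), div_div, div_le_div_iff₀ (by positivity) hr1,
    pow_succ]
  nlinarith [mul_le_mul_of_nonneg_left hrm (mul_nonneg (zero_le_one.trans hr.le) hr1.le)]

theorem sum_Ico_div_pow_le {r t : ℝ} (hr : 1 < r) (ht : 0 < t) {m : ℕ}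
    (hm : max t 1 < r ^ (m + 1)) (n : ℕ) :
    ∑ ℓ ∈ Ico (m + 1) n, t / r ^ ℓ ≤ r / (r - 1) := by
  have hr0 : 0 < r := zero_lt_one.trans hr
  simp_rw [div_eq_mul_inv t, ← inv_pow]
  rw [← mul_sum]
  calc t * ∑ ℓ ∈ Ico (m + 1) n, r⁻¹ ^ ℓ
      ≤ t * (r⁻¹ ^ (m + 1) / (1 - r⁻¹)) :=
        mul_le_mul_of_nonneg_left
          (geom_sum_Ico_le_of_lt_one (inv_nonneg.2 hr0.le) (inv_lt_one_of_one_lt₀ hr)) ht.le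
    _ = t / r ^ (m + 1) * (r / (r - 1)) := by
        rw [inv_pow]
        field_simp
    _ ≤ 1 * (r / (r - 1)) := by
        gcongr
        exact (div_le_one (by positivity)).2 ((le_max_left t 1).trans hm.le)
    _ = r / (r - 1) := one_mul _

theorem sum_Icc_min_div_pow_pow_div_le {r t : ℝ} (hr : 1 < r) (ht : 0 < t) (n : ℕ) :
    ∑ ℓ ∈ Icc 1 n, min (t / r ^ ℓ) (r ^ ℓ / t) ≤ 2 * r / (r - 1) := by
  obtain ⟨m, hm_le, hm_lt⟩ := exists_nat_pow_near (le_max_right t 1) hr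
  calc ∑ ℓ ∈ Icc 1 n, min (t / r ^ ℓ) (r ^ ℓ / t)
      ≤ ∑ ℓ ∈ Icc 1 n, if ℓ ≤ m then r ^ ℓ / t else t / r ^ ℓ :=
        sum_le_sum fun ℓ _ => by split_ifs <;> simp
    _ = ∑ ℓ ∈ Icc 1 n with ℓ ≤ m, r ^ ℓ / t + ∑ ℓ ∈ Icc 1 n with ¬ℓ ≤ m, t / r ^ ℓ :=
        sum_ite _ _
    _ ≤ ∑ ℓ ∈ Ico 1 (m + 1), r ^ ℓ / t + ∑ ℓ ∈ Ico (m + 1) (n + 1), t / r ^ ℓ := by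
        gcongr <;> intro ℓ <;> simp only [mem_filter, mem_Icc, mem_Ico] <;> omega
    _ ≤ r / (r - 1) + r / (r - 1) :=
        add_le_add (sum_Ico_one_pow_div_le hr ht hm_le) (sum_Ico_div_pow_le hr ht hm_lt _)
    _ = 2 * r / (r - 1) := by ring

theorem sqrt_two_pow (n : ℕ) : √((2 : ℝ) ^ n) = √2 ^ n := by
  rw [← Real.sqrt_sq (by positivity : 0 ≤ √2 ^ n), ← pow_mul, mul_comm, pow_mul,
    Real.sq_sqrt zero_le_two]

theorem rpow_one_div_four_sq {x : ℝ} (hx : 0 ≤ x) : (x ^ ((1 : ℝ) / 4)) ^ 2 = √x := by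
  rw [← Real.rpow_natCast, ← Real.rpow_mul hx, Real.sqrt_eq_rpow]
  norm_num

theorem min_sqrt_div_two_pow_eq_mul_min {N K A : ℝ} (hN : 0 < N) (hA : 0 < A)
    (hA_sq : A ^ 2 = √N * √K) (ℓ : ℕ) :
    min (√(N / 2 ^ ℓ)) (2 * √(2 ^ ℓ * K)) =
      √2 * A * min (√N / (√2 * A) / √2 ^ ℓ) (√2 ^ ℓ / (√N / (√2 * A))) := by
  have hN' : 0 < √N := Real.sqrt_pos.2 hN
  rw [mul_min_of_nonneg _ _ (by positivity), Real.sqrt_div' _ (by positivity),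
    Real.sqrt_mul (by positivity), sqrt_two_pow ℓ]
  congr 1
  · field_simp
  · field_simp
    rw [Real.sq_sqrt zero_le_two, hA_sq]
    ring

/-- With `N = 2^L` and `K > 1`,
`∑_{ℓ=1}^L min { √(N/2^ℓ), 2√(2^ℓ K) } ≤ (4√2 + 4) (N K)^{1/4}`. -/
theorem stmt8 (L K : ℕ) (hK : 1 < K) :
    ∑ ℓ ∈ Finset.Icc 1 L,
        min (Real.sqrt ((2 : ℝ) ^ L / 2 ^ ℓ)) (2 * Real.sqrt (2 ^ ℓ * K)) ≤
      (4 * Real.sqrt 2 + 4) * ((2 : ℝ) ^ L * K) ^ ((1 : ℝ) / 4) := by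
  have hK0 : (0 : ℝ) < K := Nat.cast_pos.2 (zero_lt_one.trans hK)
  have hN : (0 : ℝ) < 2 ^ L := by positivity
  set A := ((2 : ℝ) ^ L * K) ^ ((1 : ℝ) / 4)
  have hA : 0 < A := Real.rpow_pos_of_pos (by positivity) _
  have hA_sq : A ^ 2 = √((2 : ℝ) ^ L) * √K := by
    rw [rpow_one_div_four_sq (by positivity), Real.sqrt_mul hN.le]
  calc ∑ ℓ ∈ Icc 1 L, min (√((2 : ℝ) ^ L / 2 ^ ℓ)) (2 * √(2 ^ ℓ * K))
      = √2 * A * ∑ ℓ ∈ Icc 1 L, min (√((2 : ℝ) ^ L) / (√2 * A) / √2 ^ ℓ)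
          (√2 ^ ℓ / (√((2 : ℝ) ^ L) / (√2 * A))) := by
        simp_rw [min_sqrt_div_two_pow_eq_mul_min hN hA hA_sq, mul_sum]
    _ ≤ √2 * A * (2 * √2 / (√2 - 1)) :=
        mul_le_mul_of_nonneg_left
          (sum_Icc_min_div_pow_pow_div_le Real.one_lt_sqrt_two (by positivity) L) (by positivity)
    _ = (4 * √2 + 4) * A := by
        have : √2 - 1 ≠ 0 := (sub_pos.2 Real.one_lt_sqrt_two).ne'
        field_simp
        linear_combination (-2) * Real.sq_sqrt (zero_le_two : (0 : ℝ) ≤ 2)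
end

section
/- Let K ≤ N/3 - 1 and define x ∈ ℝ^N as follows: partition indices into H blocks of length L plus a tail of length ≥ K+1; on block j (j ≤ H) set all entries to ν·s_j, and on the tail set the last K entries alternately to ±μ·s_{H+1} and the rest to 0, where μ = 1/√(2K), ν = 1/√(2N), L = √(4NK/(2K-1)²), and s ∈ {±1}^{H+1} is any sign vector. Then ‖x‖₂ ≤ 1 and there exists an index set 𝒦₀ with |𝒦₀| = K such that ‖(Dx)_{𝒦₀}‖₁ ≥ ‖(Dx)_{𝒦₀ᶜ}‖₁. -/
open Finset

noncomputable def l2 {m : ℕ} (v : Fin m → ℝ) : ℝ := Real.sqrt (∑ i, v i ^ 2)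

/-!
On the first `N - K` indices `x` is a step function, equal to `ν s_t` on block `t` and to `0` after
the `H` blocks. Hence at most `H` of the first `N - K - 1` differences are nonzero, one per block
end, each of size at most `2ν`, so they contribute at most `2νH ≤ 2νN/L`. The last `K` differences
form `𝒦₀`: one jump `0 → ±μ` into the alternating tail and `K - 1` jumps of size `2μ`, in total
`(2K-1)μ`. The block length `L` is chosen exactly so that `2νN/L = (2K-1)μ`. Finally
`‖x‖₂² ≤ Nν² + Kμ² = 1`.
-/

theorem map_valEmbedding_univ_filter {m : ℕ} (p : ℕ → Prop) [DecidablePred p] :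
    (univ.filter fun i : Fin m => p i).map Fin.valEmbedding = (range m).filter p := by
  ext j
  simp only [mem_map, mem_filter, mem_univ, true_and, Fin.valEmbedding_apply, mem_range]
  exact ⟨fun ⟨i, hi, hij⟩ => hij ▸ ⟨i.isLt, hi⟩, fun ⟨hj, hp⟩ => ⟨⟨j, hj⟩, hp, rfl⟩⟩

theorem l2_comp_val {m : ℕ} (y : ℕ → ℝ) :
    l2 (fun j : Fin m => y j) = Real.sqrt (∑ j ∈ range m, y j ^ 2) := by
  rw [l2, Fin.sum_univ_eq_sum_range (fun j => y j ^ 2)]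

theorem l1_restr_Df_filter {N : ℕ} (y : ℕ → ℝ) (p : ℕ → Prop) [DecidablePred p] :
    l1 (restr (univ.filter fun i : Fin (N - 1) => p i) (Df fun j : Fin N => y j)) =
      ∑ i ∈ (range (N - 1)).filter p, |y (i + 1) - y i| := by
  rw [← map_valEmbedding_univ_filter, sum_map, l1, sum_filter]
  refine sum_congr rfl fun i _ => ?_
  simp only [restr, mem_filter, mem_univ, true_and, Df, Fin.valEmbedding_apply]
  split_ifs <;> simp

theorem sum_range_abs_sub_comp_le {f : ℕ → ℕ} (hf : Monotone f) {h : ℕ → ℝ} {c : ℝ} {H : ℕ}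
    (hc : ∀ t, |h t| ≤ c) (hH : ∀ t, H ≤ t → h t = 0) (n : ℕ) :
    ∑ i ∈ range n, |h (f (i + 1)) - h (f i)| ≤ 2 * c * H := by
  set J := (range n).filter fun i => f i < f (i + 1) ∧ f i < H
  have hterm : ∀ i, |h (f (i + 1)) - h (f i)| ≤
      if f i < f (i + 1) ∧ f i < H then 2 * c else 0 := by
    intro i
    split_ifs with hjump
    · linarith [abs_sub (h (f (i + 1))) (h (f i)), hc (f (i + 1)), hc (f i)]
    · have hmono := hf (Nat.le_add_right i 1)
      rcases (by omega : f (i + 1) = f i ∨ H ≤ f i) with hflat | hfar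
      · simp [hflat]
      · simp [hH _ hfar, hH _ (hfar.trans hmono)]
  -- `f` is injective on the jumps, as it is monotone and strictly increases at each of them.
  have hJ : #J ≤ #(range H) := by
    refine card_le_card_of_injOn f (fun i hi => mem_range.2 (mem_filter.1 hi).2.2) ?_
    intro i hi j hj hij
    simp only [J, coe_filter, Set.mem_ofPred_eq] at hi hj hij
    rcases lt_trichotomy i j with hlt | heq | hgt
    · linarith [hf (Nat.succ_le_of_lt hlt), hi.2.1]
    · exact heq
    · linarith [hf (Nat.succ_le_of_lt hgt), hj.2.1]
  have hc0 : 0 ≤ c := (abs_nonneg _).trans (hc 0)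
  calc ∑ i ∈ range n, |h (f (i + 1)) - h (f i)|
      ≤ ∑ i ∈ range n, if f i < f (i + 1) ∧ f i < H then 2 * c else 0 :=
        sum_le_sum fun i _ => hterm i
    _ = #J * (2 * c) := by rw [← sum_filter, sum_const, nsmul_eq_mul]
    _ ≤ 2 * c * H := by rw [mul_comm]; gcongr; simpa using hJ

theorem natFloor_div_mul_le {a b L : ℝ} (hL : 0 < L) (hb : 0 ≤ b) (hab : a ≤ b) :
    (⌊a / L⌋₊ : ℝ) * L ≤ b := by
  rcases le_or_gt 0 (a / L) with ha | ha
  · calc (⌊a / L⌋₊ : ℝ) * L ≤ a / L * L := by gcongr; exact Nat.floor_le ha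
      _ = a := div_mul_cancel₀ a hL.ne'
      _ ≤ b := hab
  · simpa [Nat.floor_of_nonpos ha.le] using hb

theorem two_mul_inv_sqrt_mul_eq {n k : ℝ} (hn : 0 < n) (hk : 1 / 2 < k) :
    2 * (1 / √(2 * n)) * n = (2 * k - 1) * (1 / √(2 * k)) * √(4 * n * k / (2 * k - 1) ^ 2) := by
  have h2k : 0 < 2 * k - 1 := by linarith
  have hsplit : √(4 * n * k) = √(2 * n) * √(2 * k) := by
    rw [← Real.sqrt_mul (by positivity)]; ring_nf
  rw [Real.sqrt_div' _ (sq_nonneg _), Real.sqrt_sq h2k.le, hsplit]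
  field_simp
  rw [Real.sq_sqrt (by positivity)]

theorem two_mul_inv_sqrt_mul_le {n k : ℝ} {H : ℕ} (hn : 0 < n) (hk : 1 / 2 < k)
    (hH : H * √(4 * n * k / (2 * k - 1) ^ 2) ≤ n) :
    2 * (1 / √(2 * n)) * H ≤ (2 * k - 1) * (1 / √(2 * k)) := by
  have hL : 0 < √(4 * n * k / (2 * k - 1) ^ 2) :=
    Real.sqrt_pos.2 (div_pos (by nlinarith) (by nlinarith))
  refine le_of_mul_le_mul_right ?_ hL
  calc 2 * (1 / √(2 * n)) * H * √(4 * n * k / (2 * k - 1) ^ 2)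
      = 2 * (1 / √(2 * n)) * (H * √(4 * n * k / (2 * k - 1) ^ 2)) := mul_assoc _ _ _
    _ ≤ 2 * (1 / √(2 * n)) * n := by gcongr
    _ = _ := two_mul_inv_sqrt_mul_eq hn hk

theorem mul_inv_sqrt_sq_add {n k : ℝ} (hn : 0 < n) (hk : 0 < k) :
    n * (1 / √(2 * n)) ^ 2 + k * (1 / √(2 * k)) ^ 2 = 1 := by
  rw [div_pow, div_pow, Real.sq_sqrt (by positivity), Real.sq_sqrt (by positivity)]
  field_simp
  ring

noncomputable def blockSignal (ν μ L : ℝ) (H N K : ℕ) (s : ℕ → ℝ) (j : ℕ) : ℝ :=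
  if (j : ℝ) < H * L then ν * s ⌊(j : ℝ) / L⌋₊
  else if N - K ≤ j then μ * s H * (-1) ^ j
  else 0

section blockSignal

variable {ν μ L : ℝ} {H N K : ℕ} {s : ℕ → ℝ}

theorem blockSignal_of_lt_sub (hL : 0 < L) {j : ℕ} (hj : j < N - K) :
    blockSignal ν μ L H N K s j =
      if ⌊(j : ℝ) / L⌋₊ < H then ν * s ⌊(j : ℝ) / L⌋₊ else 0 := by
  have hblock : (j : ℝ) < H * L ↔ ⌊(j : ℝ) / L⌋₊ < H := by
    rw [Nat.floor_lt (by positivity), div_lt_iff₀ hL]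
  simp only [blockSignal, hblock, if_neg (not_le.2 hj)]

theorem blockSignal_of_mul_le {j : ℕ} (hj : H * L ≤ j) :
    blockSignal ν μ L H N K s j = if N - K ≤ j then μ * s H * (-1) ^ j else 0 := by
  simp only [blockSignal, if_neg (not_lt.2 hj)]

theorem sum_range_sq_blockSignal_le (hs : ∀ t, |s t| ≤ 1) (hKN : K ≤ N) :
    ∑ j ∈ range N, blockSignal ν μ L H N K s j ^ 2 ≤ N * ν ^ 2 + K * μ ^ 2 := by
  have hs2 : ∀ t, s t ^ 2 ≤ 1 := fun t => sq_le_one_iff_abs_le_one _ |>.2 (hs t)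
  have hsq : ∀ j, blockSignal ν μ L H N K s j ^ 2 ≤ ν ^ 2 + if N - K ≤ j then μ ^ 2 else 0 := by
    intro j
    have hsign : ((-1 : ℝ) ^ j) ^ 2 = 1 := by rw [← pow_mul, mul_comm, pow_mul, neg_one_sq, one_pow]
    unfold blockSignal
    split_ifs <;> simp only [mul_pow, hsign, mul_one, add_zero] <;>
      nlinarith [hs2 ⌊(j : ℝ) / L⌋₊, hs2 H, sq_nonneg ν, sq_nonneg μ]
  have htail : (range N).filter (N - K ≤ ·) = Ico (N - K) N := by
    ext j; simp only [mem_filter, mem_range, mem_Ico]; omega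
  calc ∑ j ∈ range N, blockSignal ν μ L H N K s j ^ 2
      ≤ ∑ j ∈ range N, (ν ^ 2 + if N - K ≤ j then μ ^ 2 else 0) := sum_le_sum fun j _ => hsq j
    _ = N * ν ^ 2 + K * μ ^ 2 := by
      rw [sum_add_distrib, ← sum_filter, htail, sum_const, sum_const, card_range, Nat.card_Ico,
        Nat.sub_sub_self hKN, nsmul_eq_mul, nsmul_eq_mul]

theorem sum_range_abs_sub_blockSignal_le (hL : 0 < L) (hν : 0 ≤ ν) (hs : ∀ t, |s t| ≤ 1) :
    ∑ i ∈ range (N - K - 1), |blockSignal ν μ L H N K s (i + 1) - blockSignal ν μ L H N K s i|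
      ≤ 2 * ν * H := by
  have hfloor : Monotone fun j : ℕ => ⌊(j : ℝ) / L⌋₊ := fun a b hab =>
    Nat.floor_mono (div_le_div_of_nonneg_right (Nat.cast_le.2 hab) hL.le)
  have hbound : ∀ t, |if t < H then ν * s t else 0| ≤ ν := by
    intro t
    split_ifs
    · rw [abs_mul, abs_of_nonneg hν]; exact mul_le_of_le_one_right hν (hs t)
    · simpa using hν
  refine le_of_eq_of_le (sum_congr rfl fun i hi => ?_)
    (sum_range_abs_sub_comp_le hfloor hbound (fun t ht => if_neg (not_lt.2 ht)) (N - K - 1))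
  rw [mem_range] at hi
  rw [blockSignal_of_lt_sub hL (by omega), blockSignal_of_lt_sub hL (by omega), Nat.cast_succ]

theorem abs_mul_neg_one_pow_succ_sub (c : ℝ) (i : ℕ) :
    |c * (-1) ^ (i + 1) - c * (-1) ^ i| = 2 * |c| := by
  rw [pow_succ, show c * ((-1) ^ i * -1) - c * (-1) ^ i = -2 * (c * (-1) ^ i) by ring]
  simp [abs_mul]

theorem sum_Ico_abs_sub_blockSignal (hHL : H * L ≤ (N - K - 1 : ℕ)) (hK : 1 ≤ K) (hKN : K < N)
    (hsH : |s H| = 1) (hμ : 0 ≤ μ) :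
    ∑ i ∈ Ico (N - K - 1) (N - 1),
        |blockSignal ν μ L H N K s (i + 1) - blockSignal ν μ L H N K s i|
      = (2 * K - 1) * μ := by
  have htail : ∀ j, N - K - 1 ≤ j →
      blockSignal ν μ L H N K s j = if N - K ≤ j then μ * s H * (-1) ^ j else 0 :=
    fun j hj => blockSignal_of_mul_le (hHL.trans (Nat.cast_le.2 hj))
  have hμsH : |μ * s H| = μ := by rw [abs_mul, hsH, mul_one, abs_of_nonneg hμ]
  have hrest : ∀ i ∈ Ico (N - K) (N - 1),
      |blockSignal ν μ L H N K s (i + 1) - blockSignal ν μ L H N K s i| = 2 * μ := by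
    intro i hi
    rw [mem_Ico] at hi
    rw [htail _ (by omega), htail _ (by omega), if_pos (by omega), if_pos hi.1,
      abs_mul_neg_one_pow_succ_sub, hμsH]
  have hfirst : |blockSignal ν μ L H N K s (N - K - 1 + 1) - blockSignal ν μ L H N K s (N - K - 1)|
      = μ := by
    rw [show N - K - 1 + 1 = N - K by omega, htail _ (by omega), htail _ le_rfl, if_pos le_rfl,
      if_neg (by omega), sub_zero, abs_mul, abs_pow, abs_neg, abs_one, one_pow, mul_one, hμsH]
  rw [sum_eq_sum_Ico_succ_bot (by omega), hfirst, show N - K - 1 + 1 = N - K by omega,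
    sum_congr rfl hrest, sum_const, Nat.card_Ico, nsmul_eq_mul,
    show N - 1 - (N - K) = K - 1 by omega, Nat.cast_sub hK]
  push_cast
  ring

end blockSignal

/-- The lower-bound construction: with `μ = 1/√(2K)`, `ν = 1/√(2N)`,
`L = √(4NK/(2K-1)²)`, `H = ⌊(N - max{K+1, L})/L⌋` blocks of length `L` (the block
containing index `j` being `⌊j/L⌋`), a sign pattern `s`, constant value `ν s_t` on
block `t`, alternating values `± μ s_H` on the last `K` entries and `0` on the
rest of the tail, the resulting vector `x` satisfies `‖x‖₂ ≤ 1` and there is an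
index set `𝒦₀` of size `K` with `‖(Dx)_{𝒦₀}‖₁ ≥ ‖(Dx)_{𝒦₀ᶜ}‖₁`. -/
theorem stmt9 (N K : ℕ) (hK1 : 1 ≤ K) (hKN : (K : ℝ) ≤ (N : ℝ) / 3 - 1)
    (s : ℕ → ℝ) (hs : ∀ t, s t = 1 ∨ s t = -1) :
    let μ : ℝ := 1 / Real.sqrt (2 * K)
    let ν : ℝ := 1 / Real.sqrt (2 * N)
    let Lr : ℝ := Real.sqrt (4 * N * K / (2 * (K : ℝ) - 1) ^ 2)
    let H : ℕ := ⌊((N : ℝ) - max ((K : ℝ) + 1) Lr) / Lr⌋₊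
    let x : Fin N → ℝ := fun j =>
      if ((j : ℕ) : ℝ) < H * Lr then ν * s ⌊((j : ℕ) : ℝ) / Lr⌋₊
      else if N - K ≤ (j : ℕ) then μ * s H * (-1) ^ (j : ℕ)
      else 0
    l2 x ≤ 1 ∧ ∃ 𝒦₀ : Finset (Fin (N - 1)), 𝒦₀.card = K ∧
      l1 (restr 𝒦₀ᶜ (Df x)) ≤ l1 (restr 𝒦₀ (Df x)) := by
  intro μ ν Lr H x
  have hKr : (1 : ℝ) ≤ K := by exact_mod_cast hK1
  have hN : 3 * K + 3 ≤ N := by exact_mod_cast (by linarith : (3 * K + 3 : ℝ) ≤ N)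
  have hNr : (0 : ℝ) < N := by exact_mod_cast (by omega : 0 < N)
  have hsign : ∀ t, |s t| = 1 := fun t => by rcases hs t with h | h <;> simp [h]
  have hL : 0 < Lr := Real.sqrt_pos.2 (div_pos (by positivity) (by nlinarith))
  have hHL : H * Lr ≤ (N - K - 1 : ℕ) := by
    rw [Nat.cast_sub (by omega), Nat.cast_sub (by omega), Nat.cast_one]
    exact natFloor_div_mul_le hL (by linarith) (by linarith [le_max_left ((K : ℝ) + 1) Lr])
  have hjumps : 2 * ν * H ≤ (2 * K - 1) * μ :=
    two_mul_inv_sqrt_mul_le hNr (by linarith) (hHL.trans (by norm_cast; omega))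
  have hx : x = fun j : Fin N => blockSignal ν μ Lr H N K s j := rfl
  have hK₀ : (range (N - 1)).filter (N - K - 1 ≤ ·) = Ico (N - K - 1) (N - 1) := by
    ext i; simp only [mem_filter, mem_range, mem_Ico]; omega
  have hK₀' : (range (N - 1)).filter (¬N - K - 1 ≤ ·) = range (N - K - 1) := by
    ext i; simp only [mem_filter, mem_range]; omega
  refine ⟨?_, univ.filter fun i : Fin (N - 1) => N - K - 1 ≤ (i : ℕ), ?_, ?_⟩
  · rw [hx, l2_comp_val, Real.sqrt_le_one, ← mul_inv_sqrt_sq_add hNr (by positivity : (0 : ℝ) < K)]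
    exact sum_range_sq_blockSignal_le (fun t => (hsign t).le) (by omega)
  · rw [← card_map Fin.valEmbedding, map_valEmbedding_univ_filter, hK₀, Nat.card_Ico]
    omega
  · rw [compl_filter, hx, l1_restr_Df_filter _ (N - K - 1 ≤ ·),
      l1_restr_Df_filter _ (¬N - K - 1 ≤ ·), hK₀, hK₀',
      sum_Ico_abs_sub_blockSignal hHL hK1 (by omega) (hsign H) (by positivity)]
    exact (sum_range_abs_sub_blockSignal_le hL (by positivity) fun t => (hsign t).le).trans hjumps
end

section
/- Suppose the matrix A ∈ ℝ^{M×N} satisfies: (a) the balanced null-space condition: for every w in ker(A) and every 𝒦 ⊆ {1,…,N-1} with |𝒦| ≤ δN, ‖(Dw)_𝒦‖₁ ≤ C‖(Dw)_{𝒦ᶜ}‖₁ with constant 0 < C < 1; (b) the almost-Euclidean property: ‖Dw‖₁ ≥ β√N‖w‖₂ for all w ∈ ker(A); and (c) σ_min := the smallest singular value of A restricted to the range of Aᵀ is positive. Let y satisfy ‖Ax - y‖₂ ≤ ε and let x̂ minimize ‖Dz‖₁ subject to ‖Az - y‖₂ ≤ ε. Then ‖x - x̂‖₂ ≤ (2(1+C)/(β(1-C)))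 · min_{|𝒦|≤δN} ‖(Dx)_{𝒦ᶜ}‖₁/√N + (2 + 4(1+C)/(β(1-C))) · ε/σ_min. -/
/-!
Write the error as `w = w₁ + w₂` with `A w₁ = 0` and `w₂ = Aᵀ u`; such a `u` exists because
`A Aᵀ` and `A` have the same range. Both `x` and `x̂` are feasible, so `‖A w‖₂ ≤ 2ε`, and the
singular-value bound gives `‖w₂‖₂ ≤ 2ε/σmin`, hence `‖D w₂‖₁ ≤ 2√N ‖w₂‖₂` is small. Minimality of
`‖D x̂‖₁` puts `D w` in the cone `‖(D w)_𝒦ᶜ‖₁ ≤ 2‖(D x)_𝒦ᶜ‖₁ + ‖(D w)_𝒦‖₁`; the balanced null-space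
condition for `w₁` turns this into `(1 - C)‖D w₁‖₁ ≤ (1 + C)(2‖(D x)_𝒦ᶜ‖₁ + ‖D w₂‖₁)`, and the
almost-Euclidean property converts `‖D w₁‖₁` into `β√N ‖w₁‖₂`. The infimum over `𝒦` ranges over a
finite set, so it is attained and one `𝒦` suffices.
-/

open Finset Matrix

section Norms

variable {m : ℕ}

lemma l1_eq_norm (v : Fin m → ℝ) : l1 v = ‖WithLp.toLp 1 v‖ := by
  simp [l1, PiLp.norm_eq_of_L1]

lemma l2_eq_norm (v : Fin m → ℝ) : l2 v = ‖(WithLp.toLp 2 v : EuclideanSpace ℝ (Fin m))‖ := by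
  simp [l2, EuclideanSpace.norm_eq]

lemma l1_nonneg (v : Fin m → ℝ) : 0 ≤ l1 v := by
  rw [l1_eq_norm]; exact norm_nonneg _

lemma l2_nonneg (v : Fin m → ℝ) : 0 ≤ l2 v := Real.sqrt_nonneg _

lemma l1_add_le (u v : Fin m → ℝ) : l1 (u + v) ≤ l1 u + l1 v := by
  simpa only [l1_eq_norm, WithLp.toLp_add] using norm_add_le _ _

lemma l1_sub_l1_le (u v : Fin m → ℝ) : l1 u - l1 v ≤ l1 (u - v) := by
  simpa only [l1_eq_norm, WithLp.toLp_sub] using norm_sub_norm_le _ _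

lemma l1_sub_le (u v : Fin m → ℝ) : l1 (u - v) ≤ l1 u + l1 v := by
  simpa only [l1_eq_norm, WithLp.toLp_sub] using norm_sub_le _ _

lemma l1_sub_comm (u v : Fin m → ℝ) : l1 (u - v) = l1 (v - u) := by
  simpa only [l1_eq_norm, WithLp.toLp_sub] using norm_sub_rev _ _

lemma l2_add_le (u v : Fin m → ℝ) : l2 (u + v) ≤ l2 u + l2 v := by
  simpa only [l2_eq_norm, WithLp.toLp_add] using norm_add_le _ _

lemma l2_sub_le (u v : Fin m → ℝ) : l2 (u - v) ≤ l2 u + l2 v := by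
  simpa only [l2_eq_norm, WithLp.toLp_sub] using norm_sub_le _ _

lemma l1_le_sqrt_mul_l2 (v : Fin m → ℝ) : l1 v ≤ Real.sqrt m * l2 v := by
  have h := sq_sum_le_card_mul_sum_sq (s := univ) (f := fun i => |v i|)
  simp only [card_univ, Fintype.card_fin, sq_abs] at h
  rw [l2, ← Real.sqrt_mul (Nat.cast_nonneg m)]
  exact Real.le_sqrt_of_sq_le h

lemma restr_add (K : Finset (Fin m)) (u v : Fin m → ℝ) :
    restr K (u + v) = restr K u + restr K v := by
  ext i; by_cases hi : i ∈ K <;> simp [restr, hi]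

lemma restr_sub (K : Finset (Fin m)) (u v : Fin m → ℝ) :
    restr K (u - v) = restr K u - restr K v := by
  ext i; by_cases hi : i ∈ K <;> simp [restr, hi]

lemma l1_restr_add_l1_restr_compl (K : Finset (Fin m)) (v : Fin m → ℝ) :
    l1 (restr K v) + l1 (restr Kᶜ v) = l1 v := by
  simp only [l1, ← sum_add_distrib]
  exact sum_congr rfl fun i _ => by by_cases hi : i ∈ K <;> simp [restr, hi]

end Norms

section Cone

variable {m : ℕ}

lemma l1_restr_compl_sub_le {u v : Fin m → ℝ} (huv : l1 v ≤ l1 u) (K : Finset (Fin m)) :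
    l1 (restr Kᶜ (u - v)) ≤ 2 * l1 (restr Kᶜ u) + l1 (restr K (u - v)) := by
  have hK := l1_sub_l1_le (restr K u) (restr K (u - v))
  have hKc := l1_sub_l1_le (restr Kᶜ (u - v)) (restr Kᶜ u)
  rw [← restr_sub, sub_sub_cancel] at hK
  rw [l1_sub_comm, ← restr_sub, sub_sub_cancel] at hKc
  linarith [l1_restr_add_l1_restr_compl K u, l1_restr_add_l1_restr_compl K v]

lemma l1_le_of_balanced {C e : ℝ} (hC₀ : -1 ≤ C) (hC₁ : C ≤ 1) {h₁ h₂ : Fin m → ℝ}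
    {K : Finset (Fin m)} (hbal : l1 (restr K h₁) ≤ C * l1 (restr Kᶜ h₁))
    (hcone : l1 (restr Kᶜ (h₁ + h₂)) ≤ 2 * e + l1 (restr K (h₁ + h₂))) :
    (1 - C) * l1 h₁ ≤ (1 + C) * (2 * e + l1 h₂) := by
  have hKc : (1 - C) * l1 (restr Kᶜ h₁) ≤ 2 * e + l1 h₂ := by
    simp only [restr_add] at hcone
    have := l1_add_le (restr K h₁) (restr K h₂)
    have := l1_sub_le (restr Kᶜ h₁ + restr Kᶜ h₂) (restr Kᶜ h₂)
    rw [add_sub_cancel_right] at this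
    linarith [l1_restr_add_l1_restr_compl K h₂]
  rw [← l1_restr_add_l1_restr_compl K h₁]
  nlinarith [l1_nonneg (restr Kᶜ h₁)]

end Cone

section Difference

variable {N : ℕ}

lemma Df_add (u v : Fin N → ℝ) : Df (u + v) = Df u + Df v := by
  ext i; simp only [Df, Pi.add_apply]; ring

lemma Df_sub (u v : Fin N → ℝ) : Df (u - v) = Df u - Df v := by
  ext i; simp only [Df, Pi.sub_apply]; ring

lemma sum_abs_comp_le_l1 {n : ℕ} (v : Fin N → ℝ) {f : Fin n → Fin N} (hf : f.Injective) :
    ∑ i, |v (f i)| ≤ l1 v := by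
  calc ∑ i, |v (f i)| = ∑ j ∈ univ.map ⟨f, hf⟩, |v j| := by rw [sum_map]; rfl
    _ ≤ l1 v := sum_le_sum_of_subset_of_nonneg (subset_univ _) fun _ _ _ => abs_nonneg _

lemma l1_Df_le (v : Fin N → ℝ) : l1 (Df v) ≤ 2 * l1 v := by
  have hsucc := sum_abs_comp_le_l1 v (f := fun i : Fin (N - 1) => ⟨i.val + 1, by omega⟩)
    fun a b hab => by simpa [Fin.ext_iff] using hab
  have hcast := sum_abs_comp_le_l1 v (f := fun i : Fin (N - 1) => ⟨i.val, by omega⟩)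
    fun a b hab => by simpa [Fin.ext_iff] using hab
  calc l1 (Df v) ≤ ∑ i : Fin (N - 1), (|v ⟨i.val + 1, by omega⟩| + |v ⟨i.val, by omega⟩|) :=
        sum_le_sum fun _ _ => abs_sub _ _
    _ ≤ 2 * l1 v := by rw [sum_add_distrib]; linarith

lemma l1_Df_le_sqrt_mul_l2 (v : Fin N → ℝ) : l1 (Df v) ≤ 2 * Real.sqrt N * l2 v := by
  linarith [l1_Df_le v, l1_le_sqrt_mul_l2 v]

end Difference

lemma exists_mulVec_mulVec_transpose_eq {m n : Type*} [Fintype m] [Fintype n]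
    (A : Matrix m n ℝ) (w : n → ℝ) : ∃ u : m → ℝ, A *ᵥ (Aᵀ *ᵥ u) = A *ᵥ w := by
  have hle : LinearMap.range (A * Aᵀ).mulVecLin ≤ LinearMap.range A.mulVecLin := by
    rintro _ ⟨u, rfl⟩
    exact ⟨Aᵀ *ᵥ u, by simp only [mulVecLin_apply, mulVec_mulVec]⟩
  have heq := Submodule.eq_of_le_of_finrank_eq hle (rank_self_mul_transpose A)
  obtain ⟨u, hu⟩ : A *ᵥ w ∈ LinearMap.range (A * Aᵀ).mulVecLin := heq ▸ ⟨w, rfl⟩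
  exact ⟨u, by rw [mulVec_mulVec]; exact hu⟩

lemma l2_add_le_of_balanced_cone {N : ℕ} {C β e E : ℝ} (hC₀ : -1 ≤ C) (hC₁ : C < 1)
    (hβ : 0 < β) {w₁ w₂ : Fin N → ℝ} {K : Finset (Fin (N - 1))}
    (hbal : l1 (restr K (Df w₁)) ≤ C * l1 (restr Kᶜ (Df w₁)))
    (heuc : β * Real.sqrt N * l2 w₁ ≤ l1 (Df w₁))
    (hcone : l1 (restr Kᶜ (Df (w₁ + w₂))) ≤ 2 * e + l1 (restr K (Df (w₁ + w₂))))
    (hw₂ : l2 w₂ ≤ 2 * E) :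
    l2 (w₁ + w₂) ≤
      2 * (1 + C) / (β * (1 - C)) * e / Real.sqrt N + (2 + 4 * (1 + C) / (β * (1 - C))) * E := by
  have hE : 0 ≤ E := by linarith [l2_nonneg w₂]
  have h1C : 0 < 1 - C := by linarith
  rcases N.eq_zero_or_pos with rfl | hN
  · simp only [l2, Finset.univ_eq_empty, sum_empty, Real.sqrt_zero, CharP.cast_eq_zero, div_zero,
      zero_add]
    have : 0 ≤ 4 * (1 + C) / (β * (1 - C)) := div_nonneg (by linarith) (by positivity)
    exact mul_nonneg (by linarith) hE
  have hsN : 0 < Real.sqrt N := Real.sqrt_pos.mpr (by exact_mod_cast hN)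
  rw [Df_add] at hcone
  have hDw₁ := l1_le_of_balanced hC₀ hC₁.le hbal hcone
  have hDw₂ : l1 (Df w₂) ≤ 4 * Real.sqrt N * E := by
    nlinarith [l1_Df_le_sqrt_mul_l2 w₂]
  have hw₁ : l2 w₁ ≤ (1 + C) * (2 * e + 4 * Real.sqrt N * E) / (β * (1 - C) * Real.sqrt N) := by
    rw [le_div_iff₀ (by positivity)]
    nlinarith
  calc l2 (w₁ + w₂) ≤ l2 w₁ + l2 w₂ := l2_add_le w₁ w₂
    _ ≤ (1 + C) * (2 * e + 4 * Real.sqrt N * E) / (β * (1 - C) * Real.sqrt N) + 2 * E := by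
      gcongr
    _ = _ := by field_simp; ring

/-- Stability of noisy TV minimization under (a) the balanced null-space condition,
(b) the almost-Euclidean property of the kernel, and (c) a positive lower bound `σmin`
on the smallest singular value of `A` restricted to the range of `Aᵀ`. -/
theorem stmt16 (M N : ℕ) (A : Matrix (Fin M) (Fin N) ℝ)
    (δ C β σmin ε : ℝ) (hδ : 0 < δ) (hC0 : 0 < C) (hC1 : C < 1) (hβ : 0 < β)
    (hσ : 0 < σmin)
    -- (a) balanced null-space condition
    (hbal : ∀ w : Fin N → ℝ, A.mulVec w = 0 →
      ∀ 𝒦 : Finset (Fin (N - 1)), (𝒦.card : ℝ) ≤ δ * N →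
        l1 (restr 𝒦 (Df w)) ≤ C * l1 (restr 𝒦ᶜ (Df w)))
    -- (b) almost-Euclidean property for the TV norm
    (heuc : ∀ w : Fin N → ℝ, A.mulVec w = 0 → β * Real.sqrt N * l2 w ≤ l1 (Df w))
    -- (c) smallest singular value of A on the range of Aᵀ
    (hsv : ∀ u : Fin M → ℝ, σmin * l2 (Aᵀ.mulVec u) ≤ l2 (A.mulVec (Aᵀ.mulVec u)))
    (x xhat : Fin N → ℝ) (y : Fin M → ℝ)
    (hx : l2 (A.mulVec x - y) ≤ ε)
    (hfeas : l2 (A.mulVec xhat - y) ≤ ε)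
    (hmin : ∀ z : Fin N → ℝ, l2 (A.mulVec z - y) ≤ ε → l1 (Df xhat) ≤ l1 (Df z)) :
    l2 (x - xhat) ≤
      (2 * (1 + C) / (β * (1 - C))) *
          (⨅ 𝒦 : {𝒦 : Finset (Fin (N - 1)) // (𝒦.card : ℝ) ≤ δ * N},
            l1 (restr (𝒦.1)ᶜ (Df x))) / Real.sqrt N
        + (2 + 4 * (1 + C) / (β * (1 - C))) * ε / σmin := by
  have : Nonempty {𝒦 : Finset (Fin (N - 1)) // (𝒦.card : ℝ) ≤ δ * N} :=
    ⟨⟨∅, by simpa using by positivity⟩⟩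
  obtain ⟨⟨K, hK⟩, hKmin⟩ := exists_eq_ciInf_of_finite
    (f := fun 𝒦 : {𝒦 : Finset (Fin (N - 1)) // (𝒦.card : ℝ) ≤ δ * N} => l1 (restr (𝒦.1)ᶜ (Df x)))
  obtain ⟨u, hu⟩ := exists_mulVec_mulVec_transpose_eq A (x - xhat)
  have hker : A *ᵥ (x - xhat - Aᵀ *ᵥ u) = 0 := by rw [mulVec_sub, hu, sub_self]
  have hAw : l2 (A *ᵥ (x - xhat)) ≤ 2 * ε := by
    rw [mulVec_sub, ← sub_sub_sub_cancel_right _ _ y]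
    linarith [l2_sub_le (A *ᵥ x - y) (A *ᵥ xhat - y)]
  have hw₂ : l2 (Aᵀ *ᵥ u) ≤ 2 * (ε / σmin) := by
    rw [← mul_div_assoc, le_div_iff₀ hσ]
    linarith [hsv u, hu ▸ hAw]
  have hcone := l1_restr_compl_sub_le (hmin x hx) K
  rw [← Df_sub, ← sub_add_cancel (x - xhat) (Aᵀ *ᵥ u)] at hcone
  rw [← hKmin, ← sub_add_cancel (x - xhat) (Aᵀ *ᵥ u)]
  exact (l2_add_le_of_balanced_cone (by linarith) hC1 hβ (hbal _ hker K hK) (heuc _ hker) hcone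
    hw₂).trans_eq (by ring)
end
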